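/- arXiv:2211.05252 — 2 statements merged into one kernel-verified Lean document; each statement's English description precedes it below -/
import Mathlib

section
/- Let p be an odd prime. For every α ∈ ℚ_p there exists a unique p-adic fraction b such that |b| < 1/2 and ‖α − b‖_p ≤ 1. (This unique element is Browkin's fractional floor t(α), obtained by keeping only the strictly negative powers of p in the p-adic expansion of α with digits in {−(p−1)/2, …, (p−1)/2}.) -/
/-!
Some `p`-adic fraction `a = z / p^m` lies within distance `1` of `α`: choose `m` with
`p^m α ∈ ℤ_p` and approximate `p^m α` to within `p^{-m}` by an integer, `ℤ` being dense in
`ℤ_p`. Subtracting the nearest integer keeps the distance `≤ 1` and gives `|b| ≤ 1/2`; equality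
is impossible because it would make the odd number `p^m` equal to `2 |b p^m|`. Two solutions
differ by a `p`-adic fraction of `p`-adic norm `≤ 1`, i.e. an integer, of absolute value `< 1`,
i.e. zero.
-/

/-- A rational number `a` is a `p`-adic fraction if `a * p^m` is an integer
for some natural number `m`, i.e. `a ∈ ℤ[1/p]`. -/
def IsPadicFrac (p : ℕ) (a : ℚ) : Prop := ∃ (m : ℕ) (z : ℤ), a * (p : ℚ) ^ m = (z : ℚ)

namespace IsPadicFrac

variable {p : ℕ}

lemma intCast_div_pow [NeZero p] (z : ℤ) (m : ℕ) : IsPadicFrac p (z / (p : ℚ) ^ m) :=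
  ⟨m, z, div_mul_cancel₀ _ (pow_ne_zero m (mod_cast NeZero.ne p))⟩

lemma sub {a b : ℚ} (ha : IsPadicFrac p a) (hb : IsPadicFrac p b) : IsPadicFrac p (a - b) := by
  obtain ⟨m, z, hz⟩ := ha
  obtain ⟨n, w, hw⟩ := hb
  refine ⟨m + n, z * p ^ n - w * p ^ m, ?_⟩
  push_cast
  linear_combination (p : ℚ) ^ n * hz - (p : ℚ) ^ m * hw

lemma sub_intCast {a : ℚ} (ha : IsPadicFrac p a) (k : ℤ) : IsPadicFrac p (a - k) :=
  ha.sub ⟨0, k, by simp⟩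

lemma abs_ne_half (hp : Odd p) {a : ℚ} (ha : IsPadicFrac p a) : |a| ≠ 1 / 2 := by
  obtain ⟨m, z, hz⟩ := ha
  intro h
  have hpm : ((p ^ m : ℕ) : ℤ) = 2 * |z| := by
    have : ((p ^ m : ℕ) : ℚ) = ((2 * |z| : ℤ) : ℚ) := by
      push_cast
      rw [← hz, abs_mul, h, abs_of_nonneg (by positivity)]
      ring
    exact_mod_cast this
  exact Int.not_even_iff_odd.mpr (hp.pow.natCast) (hpm ▸ even_two_mul |z|)

lemma exists_eq_intCast_of_norm_le_one [Fact p.Prime] {a : ℚ} (ha : IsPadicFrac p a)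
    (h : ‖(a : ℚ_[p])‖ ≤ 1) : ∃ k : ℤ, a = k := by
  obtain ⟨m, z, hz⟩ := ha
  have hpm : (p : ℚ) ^ m ≠ 0 := pow_ne_zero m (mod_cast (Fact.out : p.Prime).ne_zero)
  have hz_norm : ‖(z : ℚ_[p])‖ ≤ (p : ℝ) ^ (-(m : ℤ)) := by
    have : (z : ℚ_[p]) = (a : ℚ_[p]) * (p : ℚ_[p]) ^ m := by exact_mod_cast hz.symm
    rw [this, norm_mul, Padic.norm_p_pow]
    exact mul_le_of_le_one_left (by positivity) h
  obtain ⟨k, rfl⟩ := (Padic.norm_int_le_pow_iff_dvd z m).mp hz_norm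
  refine ⟨k, mul_right_cancel₀ hpm ?_⟩
  rw [hz]
  push_cast
  ring

lemma eq_zero_of_abs_lt_one_of_norm_le_one [Fact p.Prime] {a : ℚ} (ha : IsPadicFrac p a)
    (habs : |a| < 1) (hnorm : ‖(a : ℚ_[p])‖ ≤ 1) : a = 0 := by
  obtain ⟨k, rfl⟩ := ha.exists_eq_intCast_of_norm_le_one hnorm
  rw [← Int.cast_abs, ← Int.cast_one, Int.cast_lt, Int.abs_lt_one_iff] at habs
  rw [habs, Int.cast_zero]

lemma eq_of_abs_lt_half_of_norm_sub_le_one [Fact p.Prime] {α : ℚ_[p]}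
    {b c : ℚ} (hb : IsPadicFrac p b) (hc : IsPadicFrac p c) (hb_half : |b| < 1 / 2)
    (hc_half : |c| < 1 / 2) (hαb : ‖α - (b : ℚ_[p])‖ ≤ 1)
    (hαc : ‖α - (c : ℚ_[p])‖ ≤ 1) :
    b = c := by
  have hnorm : ‖((b - c : ℚ) : ℚ_[p])‖ ≤ 1 := by
    rw [Rat.cast_sub, ← sub_sub_sub_cancel_left _ _ α, sub_eq_add_neg]
    exact (IsUltrametricDist.norm_add_le_max _ _).trans (max_le hαc (by rwa [norm_neg]))
  have habs : |b - c| < 1 := (abs_sub _ _).trans_lt (by linarith)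
  exact sub_eq_zero.mp ((hb.sub hc).eq_zero_of_abs_lt_one_of_norm_le_one habs hnorm)

end IsPadicFrac

lemma exists_isPadicFrac_norm_sub_le_one (p : ℕ) [Fact p.Prime] (α : ℚ_[p]) :
    ∃ a : ℚ, IsPadicFrac p a ∧ ‖α - (a : ℚ_[p])‖ ≤ 1 := by
  have hp_one : (1 : ℝ) < p := mod_cast (Fact.out : p.Prime).one_lt
  obtain ⟨m, hm⟩ := pow_unbounded_of_one_lt ‖α‖ hp_one
  have hpm : ‖(p : ℚ_[p]) ^ m‖ = ((p : ℝ) ^ m)⁻¹ := by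
    rw [norm_pow, Padic.norm_p, inv_pow]
  let x : ℤ_[p] := ⟨(p : ℚ_[p]) ^ m * α, by
    rw [norm_mul, hpm, inv_mul_le_one₀ (by positivity)]; exact hm.le⟩
  obtain ⟨z, hz⟩ := PadicInt.denseRange_intCast.exists_dist_lt x
    (inv_pos.mpr (pow_pos (zero_lt_one.trans hp_one) m))
  rw [dist_eq_norm, ← PadicInt.padic_norm_e_of_padicInt, PadicInt.coe_sub,
    PadicInt.coe_intCast] at hz
  change ‖(p : ℚ_[p]) ^ m * α - z‖ < _ at hz
  refine ⟨z / (p : ℚ) ^ m, .intCast_div_pow z m, ?_⟩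
  have hpm0 : (p : ℚ_[p]) ^ m ≠ 0 := pow_ne_zero m (mod_cast (Fact.out : p.Prime).ne_zero)
  have : α - ((z / (p : ℚ) ^ m : ℚ) : ℚ_[p]) =
      ((p : ℚ_[p]) ^ m * α - z) * ((p : ℚ_[p]) ^ m)⁻¹ := by
    push_cast
    field_simp
  rw [this, norm_mul, norm_inv, hpm, inv_inv]
  exact ((lt_inv_mul_iff₀' (by positivity)).mp (by rwa [mul_one])).le

theorem stmt_3 (p : ℕ) [Fact p.Prime] (hp : p ≠ 2) (α : ℚ_[p]) :
    ∃! b : ℚ, IsPadicFrac p b ∧ |b| < 1 / 2 ∧ ‖α - (b : ℚ_[p])‖ ≤ 1 := by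
  obtain ⟨a, ha, hαa⟩ := exists_isPadicFrac_norm_sub_le_one p α
  have hb : IsPadicFrac p (a - round a) := ha.sub_intCast (round a)
  have hb_half : |a - round a| < 1 / 2 :=
    (abs_sub_round a).lt_of_ne (hb.abs_ne_half ((Fact.out : p.Prime).odd_of_ne_two hp))
  have hαb : ‖α - ((a - round a : ℚ) : ℚ_[p])‖ ≤ 1 := by
    rw [Rat.cast_sub, Rat.cast_intCast, sub_sub_eq_add_sub, add_sub_right_comm]
    exact (IsUltrametricDist.norm_add_le_max _ _).trans (max_le hαa (Padic.norm_int_le_one _))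
  exact ⟨a - round a, ⟨hb, hb_half, hαb⟩, fun c ⟨hc, hc_half, hαc⟩ ↦
    hc.eq_of_abs_lt_half_of_norm_sub_le_one hb hc_half hb_half hαc hαb⟩
end

section
/- Let p be an odd prime and let D be an integer that is not a perfect square, with p not dividing D, and suppose there exists α₀ ∈ ℚ_p with α₀² = D. Let (α_n), (b_n) be the sequences produced by Algorithm (3) applied to α₀, and assume the expansion is periodic. Then the pre-period has length exactly 1: there exists k ≥ 1 with b_{n+k} = b_n for all n ≥ 1, but there is no k ≥ 1 with b_{n+k} = b_n for all n ≥ 0. -/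
/-- `b` is Browkin's integral floor `s α`: the unique `p`-adic fraction with
`|b| < p/2` and `‖α - b‖_p < 1`. -/
def IsIntFloor (p : ℕ) [Fact p.Prime] (α : ℚ_[p]) (b : ℚ) : Prop :=
  IsPadicFrac p b ∧ |b| < (p : ℚ) / 2 ∧ ‖α - (b : ℚ_[p])‖ < 1

/-- `b` is Browkin's fractional floor `t α`: the unique `p`-adic fraction with
`|b| < 1/2` and `‖α - b‖_p ≤ 1`. -/
def IsFracFloor (p : ℕ) [Fact p.Prime] (α : ℚ_[p]) (b : ℚ) : Prop :=
  IsPadicFrac p b ∧ |b| < 1 / 2 ∧ ‖α - (b : ℚ_[p])‖ ≤ 1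

/-- Algorithm (3): `b n = s (α n)` for even `n`, `b n = t (α n)` for odd `n`,
and `α (n + 1) = (α n - b n)⁻¹`. -/
def Alg3 (p : ℕ) [Fact p.Prime] (α : ℕ → ℚ_[p]) (b : ℕ → ℚ) : Prop :=
  (∀ n, Even n → IsIntFloor p (α n) (b n)) ∧
  (∀ n, Odd n → IsFracFloor p (α n) (b n)) ∧
  ∀ n, α (n + 1) = (α n - (b n : ℚ_[p]))⁻¹

open IsUltrametricDist

def completeQuot {K : Type*} [DivisionRing K] (b : ℕ → ℚ) (x : K) : ℕ → K
  | 0 => x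
  | n + 1 => (completeQuot b x n - b n)⁻¹

section CompleteQuot

variable {K L : Type*} [DivisionRing K] [DivisionRing L] (b : ℕ → ℚ)

lemma map_completeQuot {F : Type*} [FunLike F K L] [RingHomClass F K L] (f : F) (x : K) (n : ℕ) :
    f (completeQuot b x n) = completeQuot b (f x) n := by
  induction n with
  | zero => rfl
  | succ n ih => simp only [completeQuot, map_inv₀, map_sub, map_ratCast, ih]

lemma completeQuot_ne_ratCast [CharZero K] {x : K} (hx : ∀ q : ℚ, x ≠ q) (n : ℕ) (q : ℚ) :
    completeQuot b x n ≠ q := by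
  induction n generalizing q with
  | zero => exact hx q
  | succ n ih =>
    intro hq
    apply ih (b n + q⁻¹)
    rw [Rat.cast_add, Rat.cast_inv, ← hq, completeQuot, inv_inv, add_sub_cancel]

/-- `x` and `-x` are the images of `√d` under two `ℚ`-embeddings of the field `ℚ(√d)`, the first
of them injective. -/
lemma completeQuot_neg_eq_of_eq {L : Type*} [Field L] [CharZero L] {d : ℚ}
    (hd : ∀ r : ℚ, r ^ 2 ≠ d) {x : L} (hx : x ^ 2 = d) {i j : ℕ}
    (h : completeQuot b x i = completeQuot b x j) :
    completeQuot b (-x) i = completeQuot b (-x) j := by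
  have : Fact (∀ r : ℚ, r ^ 2 ≠ d + 0 * r) := ⟨by simpa using hd⟩
  let f := QuadraticAlgebra.lift (a := d) (b := 0) ⟨x, by simp [← sq, hx, Algebra.smul_def]⟩
  let g := QuadraticAlgebra.lift (a := d) (b := 0) ⟨-x, by simp [← sq, hx, Algebra.smul_def]⟩
  have hf : f .omega = x := by simp [f]
  have hg : g .omega = -x := by simp [g]
  rw [← hf, ← map_completeQuot, ← map_completeQuot] at h
  rw [← hg, ← map_completeQuot, ← map_completeQuot]
  exact congrArg g (RingHom.injective f.toRingHom h)

end CompleteQuot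

lemma norm_sub_eq_mul_norm_inv_sub_inv {K : Type*} [NormedField K] {u w : K} (hu : u ≠ 0)
    (hw : w ≠ 0) : ‖u - w‖ = ‖u‖ * ‖w‖ * ‖u⁻¹ - w⁻¹‖ := by
  rw [inv_sub_inv' hu hw, norm_mul, norm_mul, norm_inv, norm_inv, norm_sub_rev]
  field_simp

namespace IsUltrametricDist

variable {S : Type*} [SeminormedAddGroup S] [IsUltrametricDist S]

lemma norm_sub_le_max (x y : S) : ‖x - y‖ ≤ max ‖x‖ ‖y‖ := by
  simpa only [sub_eq_add_neg, norm_neg] using norm_add_le_max x (-y)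

lemma norm_sub_eq_right_of_lt {x y : S} (h : ‖x‖ < ‖y‖) : ‖x - y‖ = ‖y‖ := by
  rw [sub_eq_add_neg, norm_add_eq_max_of_norm_ne_norm (by rw [norm_neg]; exact h.ne), norm_neg,
    max_eq_right h.le]

end IsUltrametricDist

section Padic

variable {p : ℕ} [Fact p.Prime]

lemma Padic.norm_le_inv_of_lt_one {x : ℚ_[p]} (h : ‖x‖ < 1) : ‖x‖ ≤ (p : ℝ)⁻¹ := by
  simpa using (Padic.norm_le_pow_iff_norm_lt_pow_add_one x (-1)).mpr (by simpa using h)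

lemma Padic.norm_two_eq_one (hp : p ≠ 2) : ‖(2 : ℚ_[p])‖ = 1 := by
  have := Padic.norm_natCast_eq_one_iff.mpr
    ((Nat.coprime_primes Fact.out Nat.prime_two).mpr hp)
  exact_mod_cast this

end Padic

section PadicFrac

variable {p : ℕ}

lemma IsPadicFrac.sub_s9 {a c : ℚ} (ha : IsPadicFrac p a) (hc : IsPadicFrac p c) :
    IsPadicFrac p (a - c) := by
  obtain ⟨m, z, hz⟩ := ha
  obtain ⟨n, w, hw⟩ := hc
  refine ⟨m + n, z * (p : ℤ) ^ n - w * (p : ℤ) ^ m, ?_⟩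
  push_cast
  linear_combination (p : ℚ) ^ n * hz - (p : ℚ) ^ m * hw

variable [Fact p.Prime]

lemma IsPadicFrac.exists_int_of_norm_le_one {a : ℚ} (ha : IsPadicFrac p a)
    (h : ‖(a : ℚ_[p])‖ ≤ 1) : ∃ z : ℤ, a = z := by
  obtain ⟨m, z, hz⟩ := ha
  have hp0 : (p : ℚ) ^ m ≠ 0 := pow_ne_zero _ (Nat.cast_ne_zero.mpr (Fact.out : p.Prime).ne_zero)
  have hnorm : ‖(z : ℚ_[p])‖ ≤ (p : ℝ) ^ (-m : ℤ) := by
    have : (z : ℚ_[p]) = (a : ℚ_[p]) * (p : ℚ_[p]) ^ m := by exact_mod_cast hz.symm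
    rw [this, norm_mul, Padic.norm_p_pow]
    exact mul_le_of_le_one_left (by positivity) h
  obtain ⟨w, rfl⟩ := (Padic.norm_int_le_pow_iff_dvd z m).mp hnorm
  refine ⟨w, mul_right_cancel₀ hp0 ?_⟩
  rw [hz]
  push_cast
  ring

lemma IsIntFloor.eq_of_norm_sub_lt_one {x y : ℚ_[p]} {a c : ℚ} (ha : IsIntFloor p x a)
    (hc : IsIntFloor p y c) (h : ‖((a - c : ℚ) : ℚ_[p])‖ < 1) : a = c := by
  obtain ⟨z, hz⟩ := (ha.1.sub_s9 hc.1).exists_int_of_norm_le_one h.le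
  rw [hz, Rat.cast_intCast, Padic.norm_intCast_lt_one_iff] at h
  have habs : |z| < p := by
    have : |a - c| < p := (abs_sub _ _).trans_lt (by linarith [ha.2.1, hc.2.1])
    rw [hz] at this
    exact_mod_cast this
  rw [← sub_eq_zero, hz, Int.eq_zero_of_abs_lt_dvd h habs, Int.cast_zero]

lemma IsFracFloor.eq_of_norm_sub_le_one {x y : ℚ_[p]} {a c : ℚ} (ha : IsFracFloor p x a)
    (hc : IsFracFloor p y c) (h : ‖((a - c : ℚ) : ℚ_[p])‖ ≤ 1) : a = c := by
  obtain ⟨z, hz⟩ := (ha.1.sub_s9 hc.1).exists_int_of_norm_le_one h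
  have habs : |z| < 1 := by
    have : |a - c| < 1 := (abs_sub _ _).trans_lt (by linarith [ha.2.1, hc.2.1])
    rw [hz] at this
    exact_mod_cast this
  rw [← sub_eq_zero, hz, Int.abs_lt_one_iff.mp habs, Int.cast_zero]

end PadicFrac

namespace Alg3

variable {p : ℕ} [Fact p.Prime] {α : ℕ → ℚ_[p]} {b : ℕ → ℚ}

lemma eq_completeQuot (h : Alg3 p α b) : α = completeQuot b (α 0) := by
  funext n
  induction n with
  | zero => rfl
  | succ n ih => rw [h.2.2 n, ih, completeQuot]

lemma shift (h : Alg3 p α b) {K : ℕ} (hK : Even K) :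
    Alg3 p (fun n => α (n + K)) (fun n => b (n + K)) :=
  ⟨fun n hn => h.1 _ (hn.add hK), fun n hn => h.2.1 _ (hn.add_even hK),
    fun n => by simpa only [add_right_comm] using h.2.2 (n + K)⟩

lemma ne_digit {d : ℚ} (h : Alg3 p α b) (hd : ∀ r : ℚ, r ^ 2 ≠ d) (hsq : α 0 ^ 2 = d) (n : ℕ) :
    α n ≠ b n := by
  rw [h.eq_completeQuot]
  refine completeQuot_ne_ratCast b (fun q hq => hd q ?_) n (b n)
  exact_mod_cast hq ▸ hsq

lemma norm_sub_le_one (h : Alg3 p α b) (n : ℕ) : ‖α n - b n‖ ≤ 1 := by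
  rcases Nat.even_or_odd n with hn | hn
  · exact (h.1 n hn).2.2.le
  · exact (h.2.1 n hn).2.2

lemma norm_sub_le_inv (h : Alg3 p α b) {n : ℕ} (hn : Even n) : ‖α n - b n‖ ≤ (p : ℝ)⁻¹ :=
  Padic.norm_le_inv_of_lt_one (h.1 n hn).2.2

lemma one_le_norm_succ (h : Alg3 p α b) {n : ℕ} (hne : α n ≠ b n) : 1 ≤ ‖α (n + 1)‖ := by
  rw [h.2.2 n, norm_inv]
  exact one_le_inv₀ (norm_pos_iff.mpr (sub_ne_zero.mpr hne)) |>.mpr (h.norm_sub_le_one n)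

lemma one_lt_norm_succ (h : Alg3 p α b) {n : ℕ} (hne : α n ≠ b n) (hn : Even n) :
    1 < ‖α (n + 1)‖ := by
  rw [h.2.2 n, norm_inv]
  exact one_lt_inv₀ (norm_pos_iff.mpr (sub_ne_zero.mpr hne)) |>.mpr (h.1 n hn).2.2

lemma norm_digit_eq (h : Alg3 p α b) (hne : ∀ n, α n ≠ b n) (n : ℕ) :
    ‖(b (n + 1) : ℚ_[p])‖ = ‖α (n + 1)‖ := by
  have hlt : ‖α (n + 1) - b (n + 1)‖ < ‖α (n + 1)‖ := by
    rcases Nat.even_or_odd (n + 1) with hn | hn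
    · exact (h.1 _ hn).2.2.trans_le (h.one_le_norm_succ (hne n))
    · exact (h.norm_sub_le_one _).trans_lt
        (h.one_lt_norm_succ (hne n) (by simpa [parity_simps] using hn))
  rw [← sub_sub_cancel (α (n + 1)) (b (n + 1)), norm_sub_rev, norm_sub_eq_right_of_lt hlt]

theorem eq_of_digits_eq {α' : ℕ → ℚ_[p]} {b' : ℕ → ℚ} (h : Alg3 p α b) (h' : Alg3 p α' b')
    (hne : ∀ n, α n ≠ b n) (hne' : ∀ n, α' n ≠ b' n) {m : ℕ} (hb : ∀ n, m ≤ n → b' n = b n) :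
    α' m = α m := by
  set δ : ℕ → ℚ_[p] := fun n => α' n - α n with hδ
  have hsplit : ∀ n, m ≤ n → δ n = (α' n - b' n) - (α n - b n) := fun n hn => by
    simp only [hδ, hb n hn]; ring
  have hle_one : ∀ n, m ≤ n → ‖δ n‖ ≤ 1 := fun n hn => by
    rw [hsplit n hn]
    exact (norm_sub_le_max _ _).trans (max_le (h'.norm_sub_le_one n) (h.norm_sub_le_one n))
  have hstep : ∀ n, m ≤ n → ‖δ n‖ ≤ ‖α n - b n‖ * ‖δ (n + 1)‖ := fun n hn => by
    have hsucc : δ (n + 1) = (α' n - b' n)⁻¹ - (α n - b n)⁻¹ := by simp only [hδ, h.2.2, h'.2.2]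
    rw [hsplit n hn, norm_sub_eq_mul_norm_inv_sub_inv (sub_ne_zero.mpr (hne' n))
      (sub_ne_zero.mpr (hne n)), ← hsucc, mul_assoc]
    exact mul_le_of_le_one_left (by positivity) (h'.norm_sub_le_one n)
  have htwo : ∀ n, m ≤ n → ‖δ n‖ ≤ (p : ℝ)⁻¹ * ‖δ (n + 2)‖ := fun n hn => by
    have hprod : ‖α n - b n‖ * ‖α (n + 1) - b (n + 1)‖ ≤ (p : ℝ)⁻¹ := by
      rcases Nat.even_or_odd n with he | ho
      · exact mul_le_of_le_one_right (norm_nonneg _) (h.norm_sub_le_one _) |>.trans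
          (h.norm_sub_le_inv he)
      · exact mul_le_of_le_one_left (norm_nonneg _) (h.norm_sub_le_one _) |>.trans
          (h.norm_sub_le_inv ho.add_one)
    calc ‖δ n‖ ≤ ‖α n - b n‖ * (‖α (n + 1) - b (n + 1)‖ * ‖δ (n + 2)‖) :=
          (hstep n hn).trans (mul_le_mul_of_nonneg_left (hstep (n + 1) (by omega)) (norm_nonneg _))
      _ ≤ (p : ℝ)⁻¹ * ‖δ (n + 2)‖ := by
          rw [← mul_assoc]; exact mul_le_mul_of_nonneg_right hprod (norm_nonneg _)
  have hpow : ∀ j n, m ≤ n → ‖δ n‖ ≤ (p : ℝ)⁻¹ ^ j := by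
    intro j
    induction j with
    | zero => simpa using hle_one
    | succ j ih =>
      intro n hn
      rw [pow_succ']
      exact (htwo n hn).trans (mul_le_mul_of_nonneg_left (ih _ (by omega)) (by positivity))
  by_contra hne_m
  obtain ⟨j, hj⟩ := exists_pow_lt_of_lt_one (norm_pos_iff.mpr (sub_ne_zero.mpr hne_m))
    (inv_lt_one_of_one_lt₀ (Nat.one_lt_cast.mpr (Fact.out : p.Prime).one_lt))
  exact (hpow j m le_rfl).not_gt hj

lemma norm_completeQuot_neg_le (h : Alg3 p α b) (hne : ∀ n, α n ≠ b n) (hp : p ≠ 2)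
    (hα0 : ‖α 0‖ = 1) {n : ℕ} (hn : 1 ≤ n) :
    ‖completeQuot b (-α 0) n‖ ≤ 1 ∧ (Even n → ‖completeQuot b (-α 0) n‖ < 1) := by
  induction n, hn using Nat.le_induction with
  | base =>
    refine ⟨?_, by simp⟩
    have hlt : ‖α 0 - b 0‖ < ‖2 * α 0‖ := by
      rw [norm_mul, Padic.norm_two_eq_one hp, hα0, one_mul]
      exact (h.1 0 Even.zero).2.2
    have : -α 0 - b 0 = (α 0 - b 0) - 2 * α 0 := by ring
    rw [completeQuot, completeQuot, norm_inv, this, norm_sub_eq_right_of_lt hlt, norm_mul,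
      Padic.norm_two_eq_one hp, hα0, one_mul, inv_one]
  | succ n hn ih =>
    obtain ⟨k, rfl⟩ := Nat.exists_eq_add_of_le' hn
    have hb : ‖(b (k + 1) : ℚ_[p])‖ = ‖α (k + 1)‖ := h.norm_digit_eq hne k
    have hlt : ‖completeQuot b (-α 0) (k + 1)‖ < ‖(b (k + 1) : ℚ_[p])‖ := by
      rw [hb]
      rcases Nat.even_or_odd k with hk | hk
      · exact ih.1.trans_lt (h.one_lt_norm_succ (hne k) hk)
      · exact (ih.2 hk.add_one).trans_le (h.one_le_norm_succ (hne k))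
    rw [completeQuot, norm_inv, norm_sub_eq_right_of_lt hlt, hb]
    refine ⟨inv_le_one_of_one_le₀ (h.one_le_norm_succ (hne k)), fun he => ?_⟩
    exact inv_lt_one_of_one_lt₀ (h.one_lt_norm_succ (hne k) (by simpa [parity_simps] using he))

lemma digit_eq_of_periodic_from_succ {d : ℚ} (h : Alg3 p α b) (hd : ∀ r : ℚ, r ^ 2 ≠ d)
    (hsq : α 0 ^ 2 = d) (hp : p ≠ 2) (hα0 : ‖α 0‖ = 1) {K m : ℕ} (hK : Even K) (hm : 1 ≤ m)
    (hper : ∀ n, m + 1 ≤ n → b (n + K) = b n) : b (m + K) = b m := by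
  have hne := h.ne_digit hd hsq
  have hα : α (m + 1 + K) = α (m + 1) :=
    h.eq_of_digits_eq (h.shift hK) hne (fun n => hne (n + K)) hper
  set β := completeQuot b (-α 0)
  have hβ : β (m + K + 1) = β (m + 1) := by
    rw [add_right_comm]
    exact completeQuot_neg_eq_of_eq b hd hsq (by rwa [h.eq_completeQuot] at hα)
  have hsub : β (m + K) - b (m + K) = β m - b m := inv_injective hβ
  have hdiff : ((b (m + K) - b m : ℚ) : ℚ_[p]) = β (m + K) - β m := by
    push_cast
    linear_combination -hsub
  have hβ_le := fun n (hn : 1 ≤ n) => h.norm_completeQuot_neg_le hne hp hα0 hn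
  rcases Nat.even_or_odd m with hme | hmo
  · refine (h.1 _ (hme.add hK)).eq_of_norm_sub_lt_one (h.1 m hme) ?_
    rw [hdiff]
    exact (norm_sub_le_max _ _).trans_lt
      (max_lt ((hβ_le _ (by omega)).2 (hme.add hK)) ((hβ_le m hm).2 hme))
  · refine (h.2.1 _ (hmo.add_even hK)).eq_of_norm_sub_le_one (h.2.1 m hmo) ?_
    rw [hdiff]
    exact (norm_sub_le_max _ _).trans (max_le (hβ_le _ (by omega)).1 (hβ_le m hm).1)

theorem periodic_from_one {d : ℚ} (h : Alg3 p α b) (hd : ∀ r : ℚ, r ^ 2 ≠ d)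
    (hsq : α 0 ^ 2 = d) (hp : p ≠ 2) (hα0 : ‖α 0‖ = 1) {K : ℕ} (hK : Even K) {m : ℕ}
    (hper : ∀ n, m ≤ n → b (n + K) = b n) : ∀ n, 1 ≤ n → b (n + K) = b n := by
  induction m with
  | zero => exact fun n _ => hper n (Nat.zero_le n)
  | succ m ih =>
    rcases Nat.eq_zero_or_pos m with rfl | hm
    · exact hper
    refine ih fun n hn => ?_
    rcases hn.eq_or_lt with rfl | hlt
    · exact h.digit_eq_of_periodic_from_succ hd hsq hp hα0 hK hm hper
    · exact hper n hlt

theorem not_periodic {d : ℚ} (h : Alg3 p α b) (hd : ∀ r : ℚ, r ^ 2 ≠ d)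
    (hsq : α 0 ^ 2 = d) (hp : p ≠ 2) (hα0 : ‖α 0‖ = 1) {K : ℕ} (hK : Even K) (hK0 : K ≠ 0)
    (hper : Function.Periodic b K) : False := by
  have hne := h.ne_digit hd hsq
  have hα : α (0 + K) = α 0 :=
    h.eq_of_digits_eq (h.shift hK) hne (fun n => hne (n + K)) fun n _ => hper n
  have hβ : completeQuot b (-α 0) (0 + K) = completeQuot b (-α 0) 0 :=
    completeQuot_neg_eq_of_eq b hd hsq (by rwa [h.eq_completeQuot] at hα)
  have hβ_lt := (h.norm_completeQuot_neg_le hne hp hα0 (Nat.one_le_iff_ne_zero.mpr hK0)).2 hK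
  rw [← zero_add K, hβ, completeQuot, norm_neg, hα0] at hβ_lt
  exact lt_irrefl _ hβ_lt

end Alg3

/-- If `D` is a nonsquare integer with `p ∤ D`, `α₀² = D` in `ℚ_p`, and the
Algorithm (3) expansion of `α₀` is periodic, then the pre-period has length
exactly `1`. -/
theorem stmt_9 (p : ℕ) [Fact p.Prime] (hp : p ≠ 2) (D : ℤ)
    (hD : ¬ ∃ z : ℤ, z * z = D) (hpD : ¬ (p : ℤ) ∣ D)
    (α₀ : ℚ_[p]) (hsq : α₀ ^ 2 = (D : ℚ_[p]))
    (α : ℕ → ℚ_[p]) (b : ℕ → ℚ) (h0 : α 0 = α₀) (halg : Alg3 p α b)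
    (hper : ∃ h k : ℕ, 1 ≤ k ∧ ∀ n, h ≤ n → b (n + k) = b n) :
    (∃ k : ℕ, 1 ≤ k ∧ ∀ n, 1 ≤ n → b (n + k) = b n) ∧
      ¬ ∃ k : ℕ, 1 ≤ k ∧ ∀ n, b (n + k) = b n := by
  subst h0
  have hd : ∀ r : ℚ, r ^ 2 ≠ (D : ℚ) := fun r hr => by
    obtain ⟨z, hz⟩ := Rat.isSquare_intCast_iff.mp ⟨r, by rw [← hr, sq]⟩
    exact hD ⟨z, hz.symm⟩
  have hsq' : α 0 ^ 2 = ((D : ℚ) : ℚ_[p]) := by exact_mod_cast hsq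
  have hα0 : ‖α 0‖ = 1 := by
    have hD1 : ‖(D : ℚ_[p])‖ = 1 := le_antisymm (Padic.norm_int_le_one D)
      (not_lt.mp (mt Padic.norm_intCast_lt_one_iff.mp hpD))
    rw [← hsq, norm_pow] at hD1
    exact (pow_eq_one_iff_of_nonneg (norm_nonneg _) two_ne_zero).mp hD1
  obtain ⟨h, k, hk, hper⟩ := hper
  refine ⟨⟨2 * k, by omega, halg.periodic_from_one hd hsq' hp hα0 (even_two_mul k) (m := h)
    fun n hn => by rw [two_mul, ← add_assoc, hper _ (by omega), hper n hn]⟩, ?_⟩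
  rintro ⟨k', hk', hper'⟩
  exact halg.not_periodic hd hsq' hp hα0 (even_two_mul k') (by omega)
    fun n => by rw [two_mul, ← add_assoc, hper', hper']
end
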